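/- Fix a positive integer n with q = ⌊n/3⌋. For any preference order σ ∈ {±1}^n, setting h = max(h(σ), h(−σ)), the maximal number of napkinless diners is exactly ν_max(σ) = min{q, ⌊(n−h)/2⌋}. -/

import Mathlib

/-!
A napkinless diner `c` finds both adjacent napkins taken, necessarily by its two neighbours,
each of whom took the napkin facing `c`. Hence the seats of napkinless diners and of their left
and right neighbours are pairwise disjoint, and `3ν ≤ n`. Walking left from `c` through
neighbours who took their right napkin, the first diner preferring the right napkin is an
earlier, non-napkinless `+` diner, and distinct napkinless diners give distinct such anchors.
Splitting the napkinless diners according to whether their anchor is among the first `t` arrivals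
gives `2ν + t ≤ n + 2·#{+ among the first t}`, i.e. `2ν + h(-σ) ≤ n`; the mirror image of the
table gives `2ν + h(σ) ≤ n`.

Conversely, if `a, c, b` sit in consecutive seats, `a` prefers right, `b` prefers left and both
arrive before `c`, then `c` is napkinless. With `m = min{q, ⌊(n-h)/2⌋}`, the `k`-th `+` diner,
the `k`-th `-` diner and the `k`-th of the last `m` remaining diners form such a trap (`k < m`);
the drift bound is exactly what makes the third one arrive last. Rotating the table seats
diner `1` in seat `1` without changing `ν`.
-/

namespace Napkin

variable {n q : ℕ}

/-- The napkin to the left of seat `s`; napkin `s` itself is the one to the right of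
seat `s`, placed between seats `s` and `s + 1` around the circular table. -/
def leftNapkin (s : Fin n) : Fin n := ⟨((s : ℕ) + (n - 1)) % n, Nat.mod_lt _ s.pos⟩

/-- Process the diners `0, 1, …, n-1` in their arrival order.  Here `w i = j` means that
diner `j` sits in seat `i` (so diner `j` sits in seat `w.symm j`), and `σ j = true`
means diner `j` prefers the napkin to their right.  Each diner takes their preferred
adjacent napkin if it is unclaimed, otherwise the other adjacent napkin if it is
unclaimed, and otherwise is napkinless.  The returned state consists of the set of
claimed napkins and the set of napkinless diners. -/
def dine (σ : Fin n → Bool) (w : Equiv.Perm (Fin n)) :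
    Finset (Fin n) × Finset (Fin n) :=
  (List.finRange n).foldl
    (fun st j =>
      let s := w.symm j
      let pref := if σ j then s else leftNapkin s
      let other := if σ j then leftNapkin s else s
      if pref ∉ st.1 then (insert pref st.1, st.2)
      else if other ∉ st.1 then (insert other st.1, st.2)
      else (st.1, insert j st.2))
    (∅, ∅)

/-- The set of napkinless diners for the seating arrangement `(w, σ)`. -/
def napkinless (σ : Fin n → Bool) (w : Equiv.Perm (Fin n)) : Finset (Fin n) :=
  (dine σ w).2

/-- `ν(w,σ)`, the number of napkinless diners. -/
def nu (σ : Fin n → Bool) (w : Equiv.Perm (Fin n)) : ℕ := (napkinless σ w).card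

/-- A seating order puts diner `1` in seat `1` (index `0` here). -/
def IsSeating (w : Equiv.Perm (Fin n)) : Prop :=
  ∀ i : Fin n, (i : ℕ) = 0 → (w i : ℕ) = 0

instance : DecidablePred (IsSeating (n := n)) := fun w =>
  decidable_of_iff (∀ i : Fin n, (i : ℕ) = 0 → (w i : ℕ) = 0) Iff.rfl

/-- `ν_max(σ)`, the maximal number of napkinless diners over all seating orders. -/
def nuMax (σ : Fin n → Bool) : ℕ :=
  (Finset.univ.filter fun w : Equiv.Perm (Fin n) => IsSeating w).sup (nu σ)

/-- The value `±1` of a napkin preference. -/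
def sign (b : Bool) : ℤ := if b then 1 else -1

/-- The drift `h(σ) = max(0, max over prefixes of σ₁ + ⋯ + σᵢ)`. -/
def drift (σ : Fin n → Bool) : ℕ :=
  (Finset.range (n + 1)).sup fun i =>
    (∑ j ∈ Finset.univ.filter (fun j : Fin n => (j : ℕ) < i), sign (σ j)).toNat

/-- A bench collection: `q` pairwise disjoint triples `aᵢ < bᵢ < cᵢ` in `{1,…,n}`. -/
structure BenchCollection (n q : ℕ) where
  a : Fin q → Fin n
  b : Fin q → Fin n
  c : Fin q → Fin n
  hab : ∀ i, a i < b i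
  hbc : ∀ i, b i < c i
  disj : ∀ i j : Fin q, i ≠ j →
    Disjoint ({a i, b i, c i} : Finset (Fin n)) ({a j, b j, c j} : Finset (Fin n))

/-- A bench is balanced when its two smallest members have opposite preferences. -/
def Balanced (σ : Fin n → Bool) (β : BenchCollection n q) (i : Fin q) : Prop :=
  sign (σ (β.a i)) + sign (σ (β.b i)) = 0

instance (σ : Fin n → Bool) (β : BenchCollection n q) :
    DecidablePred (Balanced σ β) := fun i =>
  decidable_of_iff (sign (σ (β.a i)) + sign (σ (β.b i)) = 0) Iff.rfl

/-- `b(β,σ)`, the number of balanced benches of `β`. -/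
def balance (σ : Fin n → Bool) (β : BenchCollection n q) : ℕ :=
  (Finset.univ.filter fun i => Balanced σ β i).card

open Fin.CommRing Finset

section Simulation

variable (σ : Fin n → Bool) (w : Equiv.Perm (Fin n))

def prefNapkin (d : Fin n) : Fin n := if σ d then w.symm d else leftNapkin (w.symm d)

def otherNapkin (d : Fin n) : Fin n := if σ d then leftNapkin (w.symm d) else w.symm d

def step (st : Finset (Fin n) × Finset (Fin n)) (d : Fin n) :
    Finset (Fin n) × Finset (Fin n) :=
  if prefNapkin σ w d ∉ st.1 then (insert (prefNapkin σ w d) st.1, st.2)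
  else if otherNapkin σ w d ∉ st.1 then (insert (otherNapkin σ w d) st.1, st.2)
  else (st.1, insert d st.2)

def state (j : ℕ) : Finset (Fin n) × Finset (Fin n) :=
  ((List.finRange n).take j).foldl (step σ w) (∅, ∅)

def claimed (j : ℕ) : Finset (Fin n) := (state σ w j).1

def Claims (d p : Fin n) : Prop := p ∉ claimed σ w d ∧ p ∈ claimed σ w (d + 1)

variable {σ w}

lemma dine_eq_foldl : dine σ w = (List.finRange n).foldl (step σ w) (∅, ∅) := rfl

lemma napkinless_eq_state : napkinless σ w = (state σ w n).2 := by
  rw [napkinless, dine_eq_foldl, state, List.take_of_length_le (by simp)]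

lemma step_fst (st : Finset (Fin n) × Finset (Fin n)) (d : Fin n) :
    (step σ w st d).1 = if prefNapkin σ w d ∉ st.1 then insert (prefNapkin σ w d) st.1
      else if otherNapkin σ w d ∉ st.1 then insert (otherNapkin σ w d) st.1 else st.1 := by
  unfold step; split_ifs <;> rfl

lemma step_snd (st : Finset (Fin n) × Finset (Fin n)) (d : Fin n) :
    (step σ w st d).2 =
      if prefNapkin σ w d ∈ st.1 ∧ otherNapkin σ w d ∈ st.1 then insert d st.2 else st.2 := by
  unfold step; split_ifs <;> simp_all

lemma state_succ {j : ℕ} (hj : j < n) :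
    state σ w (j + 1) = step σ w (state σ w j) ⟨j, hj⟩ := by
  rw [state, state, List.take_add_one, List.getElem?_eq_getElem (by simpa using hj),
    List.getElem_finRange]
  simp

lemma state_succ_of_le {j : ℕ} (hj : n ≤ j) : state σ w (j + 1) = state σ w j := by
  simp only [state]
  rw [List.take_of_length_le (by simp; omega), List.take_of_length_le (by simp; omega)]

lemma claimed_succ (d : Fin n) : claimed σ w (d + 1) = (step σ w (state σ w d) d).1 := by
  rw [claimed, state_succ d.isLt]

lemma claimed_mono : Monotone (claimed σ w) := by
  refine monotone_nat_of_le_succ fun j => ?_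
  rcases lt_or_ge j n with hj | hj
  · simp only [claimed, state_succ hj, step_fst]
    split_ifs <;> simp [Finset.subset_insert]
  · simp only [claimed, state_succ_of_le hj, le_refl]

lemma exists_claims_of_mem_claimed {p : Fin n} {j : ℕ} (h : p ∈ claimed σ w j) :
    ∃ d : Fin n, (d : ℕ) < j ∧ Claims σ w d p := by
  induction j with
  | zero => simp [claimed, state] at h
  | succ j ih =>
    by_cases hp : p ∈ claimed σ w j
    · obtain ⟨d, hd, hc⟩ := ih hp
      exact ⟨d, by omega, hc⟩
    · have hj : j < n := by
        by_contra! hj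
        rw [claimed, state_succ_of_le hj] at h
        exact hp h
      exact ⟨⟨j, hj⟩, by simp, hp, h⟩

lemma mem_state_snd_iff {d : Fin n} {j : ℕ} :
    d ∈ (state σ w j).2 ↔
      (d : ℕ) < j ∧ prefNapkin σ w d ∈ claimed σ w d ∧ otherNapkin σ w d ∈ claimed σ w d := by
  induction j with
  | zero => simp [state]
  | succ j ih =>
    rcases lt_or_ge j n with hj | hj
    · rw [state_succ hj, step_snd]
      by_cases hd : (d : ℕ) = j
      · obtain rfl : d = ⟨j, hj⟩ := Fin.ext hd
        split_ifs with h <;> simp_all [claimed]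
      · have hne : d ≠ ⟨j, hj⟩ := fun h => hd (by simp [h])
        split_ifs <;> simp only [Finset.mem_insert, hne, false_or, ih] <;> grind
    · rw [state_succ_of_le hj, ih]
      have := d.isLt
      constructor <;> rintro ⟨h1, h2⟩ <;> exact ⟨by omega, h2⟩

lemma mem_napkinless_iff {d : Fin n} :
    d ∈ napkinless σ w ↔ prefNapkin σ w d ∈ claimed σ w d ∧ otherNapkin σ w d ∈ claimed σ w d := by
  rw [napkinless_eq_state, mem_state_snd_iff]
  simp [d.isLt]

lemma claims_iff {d p : Fin n} :
    Claims σ w d p ↔ (prefNapkin σ w d ∉ claimed σ w d ∧ p = prefNapkin σ w d) ∨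
      (prefNapkin σ w d ∈ claimed σ w d ∧ otherNapkin σ w d ∉ claimed σ w d ∧
        p = otherNapkin σ w d) := by
  rw [Claims, claimed_succ, step_fst]
  simp only [claimed] at *
  split_ifs with h1 h2 <;> aesop

lemma prefNapkin_mem_claimed_succ (d : Fin n) : prefNapkin σ w d ∈ claimed σ w (d + 1) := by
  rw [claimed_succ, step_fst]
  split_ifs <;> simp_all

lemma Claims.eq_prefNapkin_or_eq_otherNapkin {d p : Fin n} (h : Claims σ w d p) :
    p = prefNapkin σ w d ∨ p = otherNapkin σ w d := by
  rcases claims_iff.mp h with h | h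
  exacts [Or.inl h.2, Or.inr h.2.2]

lemma Claims.unique {d p p' : Fin n} (h : Claims σ w d p) (h' : Claims σ w d p') : p = p' := by
  rcases claims_iff.mp h with h | h <;> rcases claims_iff.mp h' with h' | h' <;> grind

lemma Claims.prefNapkin_mem {d p : Fin n} (h : Claims σ w d p) (hp : p ≠ prefNapkin σ w d) :
    prefNapkin σ w d ∈ claimed σ w d := by
  rcases claims_iff.mp h with h | h
  exacts [absurd h.2 hp, h.1]

lemma not_claims_of_mem_napkinless {d p : Fin n} (h : d ∈ napkinless σ w) :
    ¬ Claims σ w d p := by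
  rw [mem_napkinless_iff] at h
  rw [claims_iff]
  tauto

lemma two_le_of_mem_napkinless {c : Fin n} (hc : c ∈ napkinless σ w) : 2 ≤ n := by
  obtain ⟨d, hd, -⟩ := exists_claims_of_mem_claimed (mem_napkinless_iff.mp hc).1
  omega

end Simulation

section Relabel

variable {σ σ' : Fin n → Bool} {w w' : Equiv.Perm (Fin n)}

lemma nu_eq_of_relabel (ψ : Fin n → Fin n) (hψ : Function.Injective ψ)
    (hpref : ∀ d, prefNapkin σ' w' d = ψ (prefNapkin σ w d))
    (hother : ∀ d, otherNapkin σ' w' d = ψ (otherNapkin σ w d)) :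
    nu σ' w' = nu σ w := by
  have hstep : ∀ (st : Finset (Fin n) × Finset (Fin n)) d,
      step σ' w' (st.1.image ψ, st.2) d = ((step σ w st d).1.image ψ, (step σ w st d).2) := by
    intro st d
    simp only [step, hpref, hother, hψ.mem_finset_image]
    split_ifs <;> simp [Finset.image_insert]
  have hfold := List.foldl_hom (fun st : Finset (Fin n) × Finset (Fin n) => (st.1.image ψ, st.2))
    (l := List.finRange n) (init := (∅, ∅)) hstep
  simp only [Finset.image_empty] at hfold
  simp only [nu, napkinless, dine_eq_foldl, hfold]

end Relabel

section Seats

variable [NeZero n] {σ : Fin n → Bool} {w : Equiv.Perm (Fin n)}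

lemma leftNapkin_eq_sub_one (s : Fin n) : leftNapkin s = s - 1 := by
  ext
  rw [Fin.sub_def]
  rcases Nat.lt_or_ge 1 n with h | h
  · simp [leftNapkin, Nat.mod_eq_of_lt h, Nat.add_comm]
  · obtain rfl : n = 1 := by have := NeZero.ne n; omega
    simp [leftNapkin]

lemma prefNapkin_eq (d : Fin n) : prefNapkin σ w d = if σ d then w.symm d else w.symm d - 1 := by
  simp [prefNapkin, leftNapkin_eq_sub_one]

lemma otherNapkin_eq (d : Fin n) : otherNapkin σ w d = if σ d then w.symm d - 1 else w.symm d := by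
  simp [otherNapkin, leftNapkin_eq_sub_one]

lemma nu_rotate (r : Fin n) : nu σ ((Equiv.addRight r).trans w) = nu σ w := by
  refine nu_eq_of_relabel (· - r) (sub_left_injective) (fun d => ?_) (fun d => ?_) <;>
    simp [prefNapkin_eq, otherNapkin_eq, sub_eq_add_neg] <;> split_ifs <;> ring

lemma nu_reflect : nu (fun d => !σ d) ((Equiv.neg (Fin n)).trans w) = nu σ w := by
  refine nu_eq_of_relabel (fun p => -p - 1) (sub_left_injective.comp neg_injective)
    (fun d => ?_) (fun d => ?_) <;>
    cases h : σ d <;> simp [prefNapkin_eq, otherNapkin_eq, h]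

end Seats

section Neighbours

variable [NeZero n] {σ : Fin n → Bool} {w : Equiv.Perm (Fin n)}

lemma sub_one_ne_self (hn : 2 ≤ n) (s : Fin n) : s - 1 ≠ s := by
  rw [Ne, sub_eq_self, ← Fin.val_eq_val, Fin.val_one', Nat.mod_eq_of_lt hn]
  simp

lemma Claims.seat_eq {d p : Fin n} (h : Claims σ w d p) : w.symm d = p ∨ w.symm d = p + 1 := by
  rcases h.eq_prefNapkin_or_eq_otherNapkin with rfl | rfl <;>
    cases hσ : σ d <;> simp [prefNapkin_eq, otherNapkin_eq, hσ]

lemma claimant_of_mem_claimed {p : Fin n} {j : ℕ} (h : p ∈ claimed σ w j) :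
    (Claims σ w (w p) p ∧ (w p : ℕ) < j) ∨ (Claims σ w (w (p + 1)) p ∧ (w (p + 1) : ℕ) < j) := by
  obtain ⟨d, hd, hc⟩ := exists_claims_of_mem_claimed h
  rcases hc.seat_eq with hs | hs <;> obtain rfl := w.symm_apply_eq.mp hs
  exacts [Or.inl ⟨hc, hd⟩, Or.inr ⟨hc, hd⟩]

lemma mem_napkinless_iff_seat {c : Fin n} :
    c ∈ napkinless σ w ↔ w.symm c ∈ claimed σ w c ∧ w.symm c - 1 ∈ claimed σ w c := by
  rw [mem_napkinless_iff, prefNapkin_eq, otherNapkin_eq]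
  split_ifs <;> tauto

lemma claims_left_neighbour {c : Fin n} (hc : c ∈ napkinless σ w) :
    Claims σ w (w (w.symm c - 1)) (w.symm c - 1) ∧ w (w.symm c - 1) < c := by
  rcases claimant_of_mem_claimed (mem_napkinless_iff_seat.mp hc).2 with h | ⟨h, -⟩
  · exact h
  · rw [sub_add_cancel, Equiv.apply_symm_apply] at h
    exact absurd h (not_claims_of_mem_napkinless hc)

lemma claims_right_neighbour {c : Fin n} (hc : c ∈ napkinless σ w) :
    Claims σ w (w (w.symm c + 1)) (w.symm c) ∧ w (w.symm c + 1) < c := by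
  rcases claimant_of_mem_claimed (mem_napkinless_iff_seat.mp hc).1 with ⟨h, -⟩ | h
  · rw [Equiv.apply_symm_apply] at h
    exact absurd h (not_claims_of_mem_napkinless hc)
  · exact h

lemma left_neighbour_not_mem_napkinless {c : Fin n} (hc : c ∈ napkinless σ w) :
    w (w.symm c - 1) ∉ napkinless σ w :=
  fun h => not_claims_of_mem_napkinless h (claims_left_neighbour hc).1

lemma right_neighbour_not_mem_napkinless {c : Fin n} (hc : c ∈ napkinless σ w) :
    w (w.symm c + 1) ∉ napkinless σ w :=
  fun h => not_claims_of_mem_napkinless h (claims_right_neighbour hc).1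

lemma seat_sub_one_ne_seat_add_one {c c' : Fin n} (hc : c ∈ napkinless σ w)
    (hc' : c' ∈ napkinless σ w) : w.symm c - 1 ≠ w.symm c' + 1 := by
  intro h
  have hr := (claims_right_neighbour hc').1
  rw [← h] at hr
  have hs : w.symm c - 1 = w.symm c' := (claims_left_neighbour hc).1.unique hr
  exact sub_one_ne_self (two_le_of_mem_napkinless hc) (w.symm c' + 1)
    (by rw [add_sub_cancel_right, ← h, hs])

theorem three_mul_nu_le : 3 * nu σ w ≤ n := by
  set T := (napkinless σ w).image w.symm
  have hT : ∀ s, s ∈ T ↔ w s ∈ napkinless σ w := fun s => by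
    simp [T, Equiv.symm_apply_eq]
  have hTL : Disjoint T (T.image (· - 1)) := by
    refine Finset.disjoint_left.mpr fun x hx hx' => ?_
    obtain ⟨s, hs, rfl⟩ := Finset.mem_image.mp hx'
    have := left_neighbour_not_mem_napkinless ((hT s).mp hs)
    rw [Equiv.symm_apply_apply] at this
    exact this ((hT _).mp hx)
  have hTR : Disjoint T (T.image (· + 1)) := by
    refine Finset.disjoint_left.mpr fun x hx hx' => ?_
    obtain ⟨s, hs, rfl⟩ := Finset.mem_image.mp hx'
    have := right_neighbour_not_mem_napkinless ((hT s).mp hs)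
    rw [Equiv.symm_apply_apply] at this
    exact this ((hT _).mp hx)
  have hLR : Disjoint (T.image (· - 1)) (T.image (· + 1)) := by
    refine Finset.disjoint_left.mpr fun x hx hx' => ?_
    obtain ⟨s, hs, rfl⟩ := Finset.mem_image.mp hx
    obtain ⟨s', hs', hss'⟩ := Finset.mem_image.mp hx'
    simpa [hss'] using seat_sub_one_ne_seat_add_one ((hT s).mp hs) ((hT s').mp hs')
  have hcard := Finset.card_le_univ (T ∪ T.image (· - 1) ∪ T.image (· + 1))
  rw [Finset.card_union_of_disjoint (Finset.disjoint_union_left.mpr ⟨hTR, hLR⟩),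
    Finset.card_union_of_disjoint hTL, Finset.card_image_of_injective _ sub_left_injective,
    Finset.card_image_of_injective _ (add_left_injective 1),
    Finset.card_image_of_injective _ w.symm.injective] at hcard
  simp only [Fintype.card_fin] at hcard
  rw [nu]
  omega

end Neighbours

section Anchor

variable [NeZero n] {σ : Fin n → Bool} {w : Equiv.Perm (Fin n)}

lemma claims_sub_one_of_claims_right (hn : 2 ≤ n) {t : Fin n} (h : Claims σ w (w t) t)
    (hσ : σ (w t) = false) : Claims σ w (w (t - 1)) (t - 1) ∧ w (t - 1) < w t := by
  have hpref : prefNapkin σ w (w t) = t - 1 := by simp [prefNapkin_eq, hσ]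
  have hmem := h.prefNapkin_mem (hpref ▸ (sub_one_ne_self hn t).symm)
  rw [hpref] at hmem
  rcases claimant_of_mem_claimed hmem with h' | ⟨-, h'⟩
  · exact h'
  · rw [sub_add_cancel] at h'
    exact absurd h' (lt_irrefl _)

lemma claims_of_minus_run {c : Fin n} (hc : c ∈ napkinless σ w) (i : ℕ)
    (hrun : ∀ j < i, σ (w (w.symm c - 1 - j)) = false) :
    Claims σ w (w (w.symm c - 1 - i)) (w.symm c - 1 - i) ∧ w (w.symm c - 1 - i) < c := by
  induction i with
  | zero => simpa using claims_left_neighbour hc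
  | succ i ih =>
    obtain ⟨hcl, hlt⟩ := ih fun j hj => hrun j (by omega)
    have := claims_sub_one_of_claims_right (two_le_of_mem_napkinless hc) hcl (hrun i (by omega))
    rw [Nat.cast_add_one, ← sub_sub]
    exact ⟨this.1, this.2.trans hlt⟩

lemma exists_plus_left {c : Fin n} (hc : c ∈ napkinless σ w) :
    ∃ i : ℕ, σ (w (w.symm c - 1 - i)) = true := by
  by_contra! hnone
  have := (claims_of_minus_run hc (n - 1) fun j _ => by simpa using hnone j).1
  rw [Nat.cast_sub NeZero.one_le, Fin.natCast_self, Nat.cast_one, zero_sub, sub_neg_eq_add,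
    sub_add_cancel, Equiv.apply_symm_apply] at this
  exact not_claims_of_mem_napkinless hc this

variable (σ w) in
noncomputable def plusAnchor (c : Fin n) : Fin n :=
  if hc : c ∈ napkinless σ w then w (w.symm c - 1 - (Nat.find (exists_plus_left hc) : ℕ)) else c

lemma plusAnchor_spec {c : Fin n} (hc : c ∈ napkinless σ w) :
    σ (plusAnchor σ w c) = true ∧ plusAnchor σ w c < c ∧ plusAnchor σ w c ∉ napkinless σ w := by
  rw [plusAnchor, dif_pos hc]
  obtain ⟨hcl, hlt⟩ := claims_of_minus_run hc _ fun j hj => by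
    simpa using Nat.find_min (exists_plus_left hc) hj
  exact ⟨Nat.find_spec (exists_plus_left hc), hlt, fun h => not_claims_of_mem_napkinless h hcl⟩

lemma plusAnchor_injOn : Set.InjOn (plusAnchor σ w) (napkinless σ w) := by
  suffices key : ∀ {c c'} (hc : c ∈ napkinless σ w) (hc' : c' ∈ napkinless σ w),
      Nat.find (exists_plus_left hc) ≤ Nat.find (exists_plus_left hc') →
      plusAnchor σ w c = plusAnchor σ w c' → c = c' by
    intro c hc c' hc' h
    rcases le_total (Nat.find (exists_plus_left hc)) (Nat.find (exists_plus_left hc'))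
      with hle | hle
    exacts [key hc hc' hle h, (key hc' hc hle h.symm).symm]
  intro c c' hc hc' hle h
  rw [plusAnchor, plusAnchor, dif_pos hc, dif_pos hc'] at h
  have heq := w.injective h
  set i := Nat.find (exists_plus_left hc)
  set i' := Nat.find (exists_plus_left hc')
  rcases hle.eq_or_lt with hii | hii
  · rw [hii] at heq
    exact w.symm.injective (by simpa using heq)
  · -- otherwise the seat of `c` lies inside the run of `-` diners to the left of `c'`
    have hs : w.symm c' - 1 - ((i' - i - 1 : ℕ) : Fin n) = w.symm c := by
      rw [Nat.cast_sub (by omega), Nat.cast_sub (by omega)]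
      linear_combination -heq
    have := (claims_of_minus_run hc' (i' - i - 1) fun j hj => by
      simpa using Nat.find_min (exists_plus_left hc') (by omega : j < i')).1
    rw [hs, Equiv.apply_symm_apply] at this
    exact absurd this (not_claims_of_mem_napkinless hc)

end Anchor

section Counting

lemma two_mul_card_add_le {N : Finset (Fin n)} {f : Fin n → Fin n} (p : ℕ → Prop)
    [DecidablePred p] (hf : Set.InjOn f N) (hlt : ∀ c ∈ N, f c < c) (hfN : ∀ c ∈ N, f c ∉ N)
    (hp : ∀ c ∈ N, p (f c)) {t : ℕ} (ht : t ≤ n) : 2 * #N + t ≤ n + 2 * Nat.count p t := by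
  set X := N.filter fun c => (f c : ℕ) < t
  set Y := N.filter fun c => ¬ (f c : ℕ) < t
  have hXY : #X + #Y = #N := Finset.card_filter_add_card_filter_not _
  have hX : #X ≤ Nat.count p t := by
    rw [Nat.count_eq_card_filter_range]
    refine Finset.card_le_card_of_injOn (fun c => (f c : ℕ)) (fun c hc => ?_) ?_
    · obtain ⟨hcN, hct⟩ := Finset.mem_filter.mp hc
      simpa using ⟨hct, hp c hcN⟩
    · exact fun c hc c' hc' h => hf (Finset.mem_filter.mp hc).1 (Finset.mem_filter.mp hc').1
        (Fin.ext h)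
  -- `Y` and its image under `f` both lie in `[t, n)`
  have hY : #(Y.image f ∪ Y) + #(univ.filter fun x : Fin n => (x : ℕ) < t) ≤ n := by
    rw [← Finset.card_union_of_disjoint]
    · simpa using Finset.card_le_univ (α := Fin n) _
    refine Finset.disjoint_left.mpr fun x hx hxt => ?_
    have hxt : (x : ℕ) < t := (Finset.mem_filter.mp hxt).2
    rcases Finset.mem_union.mp hx with hx | hx
    · obtain ⟨c, hc, rfl⟩ := Finset.mem_image.mp hx
      exact (Finset.mem_filter.mp hc).2 hxt
    · obtain ⟨hxN, hfx⟩ := Finset.mem_filter.mp hx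
      exact hfx ((Fin.lt_def.mp (hlt x hxN)).trans hxt)
  rw [Finset.card_union_of_disjoint, Finset.card_image_of_injOn (s := Y) (hf.mono fun c hc =>
    (Finset.mem_filter.mp hc).1), Fin.card_filter_val_lt, min_eq_right ht] at hY
  · omega
  refine Finset.disjoint_left.mpr fun x hx hxY => ?_
  obtain ⟨c, hc, rfl⟩ := Finset.mem_image.mp hx
  exact hfN c (Finset.mem_filter.mp hc).1 (Finset.mem_filter.mp hxY).1

end Counting

section Drift

def prefSeq (σ : Fin n → Bool) (i : ℕ) : Bool := if h : i < n then σ ⟨i, h⟩ else false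

lemma prefSeq_val (σ : Fin n → Bool) (j : Fin n) : prefSeq σ j = σ j := by simp [prefSeq]

lemma count_add_count_of_iff_not {p q : ℕ → Prop} [DecidablePred p] [DecidablePred q]
    (hpq : ∀ i, q i ↔ ¬ p i) (t : ℕ) : Nat.count p t + Nat.count q t = t := by
  induction t with
  | zero => simp
  | succ t ih => by_cases h : p t <;> simp [Nat.count_succ, h, hpq] <;> omega

lemma sign_not (b : Bool) : sign (!b) = -sign b := by
  cases b <;> simp [sign]

def prefixSum (σ : Fin n → Bool) (i : ℕ) : ℤ :=
  ∑ j ∈ univ.filter (fun j : Fin n => (j : ℕ) < i), sign (σ j)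

lemma prefixSum_not (σ : Fin n → Bool) (i : ℕ) : prefixSum (fun j => !σ j) i = -prefixSum σ i := by
  simp [prefixSum, sign_not]

lemma prefixSum_eq_count (σ : Fin n → Bool) {i : ℕ} (hi : i ≤ n) :
    prefixSum σ i = (Nat.count (prefSeq σ · = true) i : ℤ) - Nat.count (prefSeq σ · = false) i := by
  induction i with
  | zero => simp [prefixSum]
  | succ i ih =>
    have hfilter : univ.filter (fun j : Fin n => (j : ℕ) < i + 1) =
        insert ⟨i, hi⟩ (univ.filter fun j : Fin n => (j : ℕ) < i) := by
      ext j
      simp [Fin.ext_iff]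
      omega
    rw [prefixSum, hfilter, Finset.sum_insert (by simp), ← prefixSum, ih (by omega),
      Nat.count_succ, Nat.count_succ]
    have : prefSeq σ i = σ ⟨i, hi⟩ := dif_pos _
    cases h : σ ⟨i, hi⟩ <;> simp [this, h, sign] <;> ring

lemma prefixSum_le_drift (σ : Fin n → Bool) {i : ℕ} (hi : i ≤ n) : prefixSum σ i ≤ drift σ :=
  (Int.self_le_toNat _).trans <| Int.ofNat_le.mpr <|
    Finset.le_sup (f := fun i => (prefixSum σ i).toNat) (Finset.mem_range.mpr (by omega))

lemma drift_le_of_forall {σ : Fin n → Bool} {k : ℕ} (h : ∀ i ≤ n, prefixSum σ i ≤ k) :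
    drift σ ≤ k :=
  Finset.sup_le fun i hi => by
    have := h i (by simpa [Nat.lt_succ_iff] using hi)
    simp only [prefixSum] at this
    omega

variable [NeZero n] {σ : Fin n → Bool} {w : Equiv.Perm (Fin n)}

theorem two_mul_nu_add_drift_not_le : 2 * nu σ w + drift (fun j => !σ j) ≤ n := by
  have h3 := three_mul_nu_le (σ := σ) (w := w)
  suffices h : drift (fun j => !σ j) ≤ n - 2 * nu σ w by omega
  refine drift_le_of_forall fun i hi => ?_
  have hcount := two_mul_card_add_le (prefSeq σ · = true) (plusAnchor_injOn (w := w))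
    (fun c hc => (plusAnchor_spec hc).2.1) (fun c hc => (plusAnchor_spec hc).2.2)
    (fun c hc => by rw [prefSeq_val]; exact (plusAnchor_spec hc).1) hi
  have htot := count_add_count_of_iff_not (p := (prefSeq σ · = true))
    (q := (prefSeq σ · = false)) (by simp) i
  rw [prefixSum_not, prefixSum_eq_count σ hi]
  rw [nu] at *
  omega

theorem two_mul_nu_add_drift_le : 2 * nu σ w + drift σ ≤ n := by
  simpa [nu_reflect] using
    two_mul_nu_add_drift_not_le (σ := fun j => !σ j) (w := (Equiv.neg (Fin n)).trans w)

end Drift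

section Traps

lemma exists_count_eq {p : ℕ → Prop} [DecidablePred p] {k t : ℕ} (h : k < Nat.count p t) :
    ∃ x < t, p x ∧ Nat.count p x = k := by
  induction t with
  | zero => simp at h
  | succ t ih =>
    by_cases hk : k < Nat.count p t
    · obtain ⟨x, hx, hpx, hcx⟩ := ih hk
      exact ⟨x, by omega, hpx, hcx⟩
    · by_cases hpt : p t <;> simp only [Nat.count_succ, hpt, if_true, if_false] at h
      · exact ⟨t, by omega, hpt, by omega⟩
      · omega

lemma count_and_count_lt (p : ℕ → Prop) [DecidablePred p] (m t : ℕ) :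
    Nat.count (fun i => p i ∧ Nat.count p i < m) t = min (Nat.count p t) m := by
  induction t with
  | zero => simp
  | succ t ih =>
    by_cases h : p t
    · simp only [Nat.count_succ, h, true_and, if_true, ih]
      split_ifs <;> omega
    · simp [Nat.count_succ, h, ih]

lemma count_add_count_add_count {A B F : ℕ → Prop} [DecidablePred A] [DecidablePred B]
    [DecidablePred F] (hAB : ∀ i, ¬ (A i ∧ B i)) (hF : ∀ i, F i ↔ ¬ A i ∧ ¬ B i) (t : ℕ) :
    Nat.count F t + Nat.count A t + Nat.count B t = t := by
  induction t with
  | zero => simp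
  | succ t ih =>
    have := hAB t
    by_cases hA : A t <;> by_cases hB : B t <;> simp_all [Nat.count_succ] <;> omega

lemma count_succ_le_of_balanced {p q F : ℕ → Prop} [DecidablePred p] [DecidablePred q]
    [DecidablePred F] {n m H : ℕ} (hpq : ∀ i, q i ↔ ¬ p i)
    (hF : ∀ t, Nat.count F t + min (Nat.count p t) m + min (Nat.count q t) m = t)
    (hbal : ∀ t ≤ n, Nat.count q t ≤ Nat.count p t + H) (h2m : 2 * m + H ≤ n)
    {x : ℕ} (hxn : x < n) (hx : p x) (hxm : Nat.count p x < m) :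
    Nat.count F (x + 1) ≤ n - 3 * m + Nat.count p x := by
  have hFx := hF (x + 1)
  have hp : Nat.count p (x + 1) = Nat.count p x + 1 := by simp [Nat.count_succ, hx]
  have hq : Nat.count q (x + 1) = Nat.count q x := by simp [Nat.count_succ, hpq, hx]
  have htot := count_add_count_of_iff_not hpq x
  have hb := hbal x hxn.le
  omega

lemma lt_of_count_succ_le {p : ℕ → Prop} [DecidablePred p] {x y : ℕ} (hy : p y)
    (h : Nat.count p (x + 1) ≤ Nat.count p y) : x < y := by
  by_contra! hle
  have := Nat.count_monotone p (by omega : y + 1 ≤ x + 1)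
  rw [Nat.count_succ, if_pos hy] at this
  omega

lemma injective_of_ranges_disjoint {α : Type*} {m : ℕ} {a b c : Fin m → α}
    (ha : Function.Injective a) (hb : Function.Injective b) (hc : Function.Injective c)
    (hab : ∀ k l, a k ≠ b l) (hac : ∀ k l, c k ≠ a l) (hbc : ∀ k l, c k ≠ b l) :
    Function.Injective fun x : Fin m × Fin 3 => ![a x.1, c x.1, b x.1] x.2 := by
  rintro ⟨k, i⟩ ⟨l, j⟩ h
  fin_cases i <;> fin_cases j <;> simp at h ⊢
  all_goals first
    | exact ha h | exact hb h | exact hc h | exact hac _ _ h | exact hbc _ _ h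
    | exact hab _ _ h | exact hac _ _ h.symm | exact hbc _ _ h.symm | exact hab _ _ h.symm

theorem exists_traps {P D : ℕ → Prop} [DecidablePred P] [DecidablePred D]
    (hDP : ∀ i, D i ↔ ¬ P i) {n m H : ℕ}
    (hbal : ∀ t ≤ n, Nat.count D t ≤ Nat.count P t + H ∧ Nat.count P t ≤ Nat.count D t + H)
    (h3m : 3 * m ≤ n) (h2m : 2 * m + H ≤ n) :
    ∃ T : Fin m × Fin 3 → ℕ, Function.Injective T ∧ ∀ k, P (T (k, 0)) ∧ D (T (k, 2)) ∧
      T (k, 0) < T (k, 1) ∧ T (k, 2) < T (k, 1) ∧ T (k, 1) < n := by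
  -- the middle of each trap is chosen among the positions that are neither among the first `m`
  -- of `P` nor among the first `m` of `D`
  set F : ℕ → Prop := fun i => ¬ (P i ∧ Nat.count P i < m) ∧ ¬ (D i ∧ Nat.count D i < m)
  have hPD : ∀ i, P i ↔ ¬ D i := fun i => by rw [hDP, not_not]
  have hF : ∀ t, Nat.count F t + min (Nat.count P t) m + min (Nat.count D t) m = t := by
    intro t
    rw [← count_and_count_lt, ← count_and_count_lt]
    exact count_add_count_add_count (fun i h => (hDP i).mp h.2.1 h.1.1) (fun i => Iff.rfl) t
  have hF' : ∀ t, Nat.count F t + min (Nat.count D t) m + min (Nat.count P t) m = t :=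
    fun t => by have := hF t; omega
  have htot := count_add_count_of_iff_not hDP n
  have hbaln := hbal n le_rfl
  have hFn := hF n
  choose a ha using fun k : Fin m => exists_count_eq (p := P) (t := n) (k := k) (by omega)
  choose b hb using fun k : Fin m => exists_count_eq (p := D) (t := n) (k := k) (by omega)
  choose c hc using fun k : Fin m =>
    exists_count_eq (p := F) (t := n) (k := n - 3 * m + k) (by omega)
  have hainj : Function.Injective a := fun k l h =>
    Fin.ext (by rw [← (ha k).2.2, ← (ha l).2.2, h])
  have hbinj : Function.Injective b := fun k l h =>
    Fin.ext (by rw [← (hb k).2.2, ← (hb l).2.2, h])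
  have hcinj : Function.Injective c := fun k l h => by
    have := congrArg (Nat.count F) h
    rw [(hc k).2.2, (hc l).2.2] at this
    exact Fin.ext (by omega)
  have hab : ∀ k l, a k ≠ b l := fun k l h => (hDP _).mp (hb l).2.1 (h ▸ (ha k).2.1)
  have hac : ∀ k l, c k ≠ a l := fun k l h =>
    (hc k).2.1.1 ⟨h ▸ (ha l).2.1, by simp [h, (ha l).2.2]⟩
  have hbc : ∀ k l, c k ≠ b l := fun k l h =>
    (hc k).2.1.2 ⟨h ▸ (hb l).2.1, by simp [h, (hb l).2.2]⟩
  refine ⟨_, injective_of_ranges_disjoint hainj hbinj hcinj hab hac hbc, fun k =>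
    ⟨(ha k).2.1, (hb k).2.1, lt_of_count_succ_le (hc k).2.1 ?_,
      lt_of_count_succ_le (hc k).2.1 ?_, (hc k).1⟩⟩
  · simpa [(ha k).2.2, (hc k).2.2] using count_succ_le_of_balanced hDP hF
      (fun t ht => (hbal t ht).1) h2m (ha k).1 (ha k).2.1 (by simp [(ha k).2.2])
  · simpa [(hb k).2.2, (hc k).2.2] using count_succ_le_of_balanced hPD hF'
      (fun t ht => (hbal t ht).2) h2m (hb k).1 (hb k).2.1 (by simp [(hb k).2.2])

end Traps

section Construction

lemma exists_perm_comp_eq {α : Type*} {e T : α → Fin n} (he : Function.Injective e)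
    (hT : Function.Injective T) : ∃ w : Equiv.Perm (Fin n), ∀ x, w (e x) = T x := by
  classical
  refine ⟨((Equiv.ofInjective e he).symm.trans (Equiv.ofInjective T hT)).extendSubtype,
    fun x => ?_⟩
  rw [Equiv.extendSubtype_apply_of_mem _ _ ⟨x, rfl⟩]
  simp

variable [NeZero n] {σ : Fin n → Bool} {w : Equiv.Perm (Fin n)}

lemma mem_napkinless_of_neighbours {s : Fin n} (hl : σ (w (s - 1)) = true)
    (hr : σ (w (s + 1)) = false) (hlt : w (s - 1) < w s) (hrt : w (s + 1) < w s) :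
    w s ∈ napkinless σ w := by
  rw [mem_napkinless_iff_seat, Equiv.symm_apply_apply]
  constructor
  · have := prefNapkin_mem_claimed_succ (σ := σ) (w := w) (w (s + 1))
    rw [prefNapkin_eq, if_neg (by simp [hr]), Equiv.symm_apply_apply, add_sub_cancel_right] at this
    exact claimed_mono (Nat.succ_le_of_lt hrt) this
  · have := prefNapkin_mem_claimed_succ (σ := σ) (w := w) (w (s - 1))
    rw [prefNapkin_eq, if_pos hl, Equiv.symm_apply_apply] at this
    exact claimed_mono (Nat.succ_le_of_lt hlt) this

theorem exists_le_nu_of_traps {m : ℕ} (h3m : 3 * m ≤ n) {T : Fin m × Fin 3 → Fin n}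
    (hT : Function.Injective T)
    (htrap : ∀ k, σ (T (k, 0)) = true ∧ σ (T (k, 2)) = false ∧
      T (k, 0) < T (k, 1) ∧ T (k, 2) < T (k, 1)) :
    ∃ w : Equiv.Perm (Fin n), m ≤ nu σ w := by
  let e : Fin m × Fin 3 → Fin n := fun x => ⟨3 * x.1 + x.2, by omega⟩
  have he : Function.Injective e := by
    rintro ⟨k, i⟩ ⟨l, j⟩ h
    simp only [e, Fin.mk.injEq] at h
    ext <;> simp only [Fin.val_eq_val] <;> omega
  obtain ⟨w, hw⟩ := exists_perm_comp_eq he hT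
  have hseat : ∀ k (i j : Fin 3), (j : ℕ) = i + 1 → e (k, i) + 1 = e (k, j) := by
    intro k i j hij
    ext
    rw [Fin.val_add, Fin.val_one', Nat.add_mod_mod, Nat.mod_eq_of_lt] <;> simp only [e] <;> omega
  have hmem : ∀ k, T (k, 1) ∈ napkinless σ w := by
    intro k
    have h0 : e (k, 1) - 1 = e (k, 0) := (eq_sub_of_add_eq (hseat k 0 1 rfl)).symm
    have h2 : e (k, 1) + 1 = e (k, 2) := hseat k 1 2 rfl
    rw [← hw]
    refine mem_napkinless_of_neighbours ?_ ?_ ?_ ?_ <;>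
      simp only [h0, h2, hw] <;> simp [htrap k]
  refine ⟨w, ?_⟩
  calc m = #((univ : Finset (Fin m)).image fun k => T (k, 1)) := by
        rw [Finset.card_image_of_injective _ fun k l h => by simpa using hT h]
        simp
    _ ≤ nu σ w := Finset.card_le_card fun x hx => by
        obtain ⟨k, -, rfl⟩ := Finset.mem_image.mp hx
        exact hmem k

end Construction

section Bounds

variable {σ : Fin n → Bool}

lemma count_balanced_of_drift_le {H : ℕ} (h1 : drift σ ≤ H) (h2 : drift (fun j => !σ j) ≤ H)
    {t : ℕ} (ht : t ≤ n) :
    Nat.count (prefSeq σ · = false) t ≤ Nat.count (prefSeq σ · = true) t + H ∧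
      Nat.count (prefSeq σ · = true) t ≤ Nat.count (prefSeq σ · = false) t + H := by
  have hs := prefixSum_le_drift σ ht
  have hs' := prefixSum_le_drift (fun j => !σ j) ht
  rw [prefixSum_not, prefixSum_eq_count σ ht] at hs'
  rw [prefixSum_eq_count σ ht] at hs
  omega

variable [NeZero n]

theorem exists_le_nu {m H : ℕ} (h1 : drift σ ≤ H) (h2 : drift (fun j => !σ j) ≤ H)
    (h3m : 3 * m ≤ n) (h2m : 2 * m + H ≤ n) : ∃ w : Equiv.Perm (Fin n), m ≤ nu σ w := by
  obtain ⟨T, hT, htrap⟩ := exists_traps (P := (prefSeq σ · = true)) (D := (prefSeq σ · = false))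
    (by simp) (fun t ht => count_balanced_of_drift_le h1 h2 ht) h3m h2m
  have hTn : ∀ x, T x < n := by
    rintro ⟨k, i⟩
    have := htrap k
    fin_cases i <;> simp <;> omega
  refine exists_le_nu_of_traps h3m (T := fun x => ⟨T x, hTn x⟩)
    (fun x y h => hT (by simpa using h)) fun k => ?_
  have := htrap k
  simp only [prefSeq, hTn, dif_pos] at this
  exact ⟨this.1, this.2.1, this.2.2.1, this.2.2.2.1⟩

lemma nu_le_nuMax (σ : Fin n → Bool) (w : Equiv.Perm (Fin n)) : nu σ w ≤ nuMax σ := by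
  rw [← nu_rotate (w := w) (w.symm 0)]
  refine Finset.le_sup (Finset.mem_filter.mpr ⟨Finset.mem_univ _, fun i hi => ?_⟩)
  obtain rfl : i = 0 := Fin.ext hi
  simp

end Bounds

/-- With `q = ⌊n/3⌋` and `h = max(h(σ), h(-σ))`, the maximal number of
napkinless diners is exactly `ν_max(σ) = min{q, ⌊(n-h)/2⌋}`. -/
theorem statement9 (n : ℕ) (hn : 1 ≤ n) (q : ℕ) (hq : q = n / 3)
    (σ : Fin n → Bool) (h : ℕ) (hmax : h = max (drift σ) (drift fun j => !σ j)) :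
    nuMax σ = min q ((n - h) / 2) := by
  have : NeZero n := ⟨by omega⟩
  have hupper : ∀ w, nu σ w ≤ min q ((n - h) / 2) ∧ h ≤ n := by
    intro w
    have h3 := three_mul_nu_le (σ := σ) (w := w)
    have hd := two_mul_nu_add_drift_le (σ := σ) (w := w)
    have hd' := two_mul_nu_add_drift_not_le (σ := σ) (w := w)
    omega
  apply le_antisymm (Finset.sup_le fun w _ => (hupper w).1)
  obtain ⟨w, hw⟩ := exists_le_nu (m := min q ((n - h) / 2)) (hmax ▸ le_max_left _ _)
    (hmax ▸ le_max_right _ _) (by omega) (by have := (hupper 1).2; omega)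
  exact hw.trans (nu_le_nuMax σ w)

end Napkin
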